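/- arXiv:1807.02955 — 6 statements merged into one kernel-verified Lean document; each statement's English description precedes it below -/
import Mathlib

section
/- If limsup_{n→∞} |cos n|^(n²) ≠ 1 (equivalently, limsup_{n→∞} |cos n|^(n²) < 1), where n ranges over the positive integers, then the irrationality measure of π equals 2; that is, for every ε > 0, only finitely many rational numbers p/q (q ≥ 1, lowest terms) satisfy 0 < |π − p/q| < 1/q^(2+ε). -/
set_option maxHeartbeats 1000000

open Filter Real

/-- The irrationality measure of `α`. -/
noncomputable def irrationalityMeasure (α : ℝ) : ℝ :=
  sInf {μ : ℝ |
    {r : ℚ | 0 < |α - (r : ℝ)| ∧ |α - (r : ℝ)| < 1 / (r.den : ℝ) ^ μ}.Finite}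

/-- Rationals with bounded numerator and denominator form a finite set. -/
lemma finite_rat_of_bounds (B : ℕ) (M : ℤ) :
    {r : ℚ | r.den ≤ B ∧ |r.num| ≤ M}.Finite := by
  apply Set.Finite.of_finite_image (f := fun r : ℚ => (r.num, r.den))
  · apply Set.Finite.subset (((Set.finite_Icc (-M) M).prod (Set.finite_Icc 0 B)))
    rintro ⟨p, q⟩ ⟨r, ⟨h1, h2⟩, heq⟩
    obtain ⟨hp, hq⟩ : r.num = p ∧ r.den = q := by simpa [Prod.ext_iff] using heq
    subst hp; subst hq
    exact ⟨⟨(abs_le.1 h2).1, (abs_le.1 h2).2⟩, ⟨Nat.zero_le _, h1⟩⟩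
  · intro a _ b _ hab
    exact Rat.ext (congrArg Prod.fst hab) (congrArg Prod.snd hab)

/-- The main finiteness statement. -/
lemma key_finite
    (h : Filter.limsup (fun n : ℕ => |Real.cos n| ^ ((n : ℝ) ^ 2)) Filter.atTop ≠ 1)
    {ε : ℝ} (hε : 0 < ε) :
    {r : ℚ | 0 < |Real.pi - (r : ℝ)| ∧
        |Real.pi - (r : ℝ)| < 1 / (r.den : ℝ) ^ (2 + ε)}.Finite := by
  set f : ℕ → ℝ := fun n : ℕ => |Real.cos n| ^ ((n : ℝ) ^ 2) with hf
  have hf01 : ∀ n, 0 ≤ f n ∧ f n ≤ 1 := fun n =>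
    ⟨Real.rpow_nonneg (abs_nonneg _) _,
     Real.rpow_le_one (abs_nonneg _) (Real.abs_cos_le_one _) (by positivity)⟩
  have hfpow : ∀ k : ℕ, f k = |Real.cos (k : ℝ)| ^ (k ^ 2 : ℕ) := by
    intro k
    show |Real.cos (k : ℝ)| ^ ((k : ℝ) ^ 2) = _
    rw [show ((k : ℝ) ^ 2) = ((k ^ 2 : ℕ) : ℝ) by push_cast; ring, Real.rpow_natCast]
  clear_value f
  have hL1 : Filter.limsup f Filter.atTop ≤ 1 :=
    limsup_le_of_le (isCoboundedUnder_le_of_le _ fun n => (hf01 n).1)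
      (Eventually.of_forall fun n => (hf01 n).2)
  have hLlt : Filter.limsup f Filter.atTop < 1 := lt_of_le_of_ne hL1 h
  set c : ℝ := (1 + Filter.limsup f Filter.atTop) / 2 with hc
  have hcL : Filter.limsup f Filter.atTop < c := by rw [hc]; linarith
  have hc1 : c < 1 := by rw [hc]; linarith
  clear_value c
  have hev : ∀ᶠ n in Filter.atTop, f n < c :=
    eventually_lt_of_limsup_lt hcL (isBoundedUnder_of_eventually_le (Eventually.of_forall fun n => (hf01 n).2))
  obtain ⟨N, hN⟩ := eventually_atTop.1 hev
  have htend : Filter.Tendsto (fun q : ℕ => (q : ℝ) ^ (2 * ε)) Filter.atTop Filter.atTop :=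
    (tendsto_rpow_atTop (by linarith)).comp tendsto_natCast_atTop_atTop
  obtain ⟨B₁, hB₁⟩ := eventually_atTop.1 (htend.eventually_gt_atTop (25 / (2 * (1 - c))))
  set B : ℕ := max B₁ N with hB
  by_contra hS
  -- there is an element with denominator > B
  have hex : ∃ r : ℚ, (0 < |Real.pi - (r : ℝ)| ∧
      |Real.pi - (r : ℝ)| < 1 / (r.den : ℝ) ^ (2 + ε)) ∧ B < r.den := by
    by_contra hc'
    push_neg at hc'
    apply hS
    apply Set.Finite.subset (finite_rat_of_bounds B (5 * B))
    rintro r ⟨h1, h2⟩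
    have hq1 : (1 : ℝ) ≤ (r.den : ℝ) := by exact_mod_cast r.pos
    have hpow1 : (1 : ℝ) ≤ (r.den : ℝ) ^ (2 + ε) :=
      Real.one_le_rpow hq1 (by linarith)
    have hlt1 : |Real.pi - (r : ℝ)| < 1 := lt_of_lt_of_le h2 (by
      rw [div_le_one (by linarith)]; exact hpow1)
    have hden : r.den ≤ B := hc' r ⟨h1, h2⟩
    refine ⟨hden, ?_⟩
    have hr5 : |(r : ℝ)| < 5 := by
      have := abs_lt.1 hlt1
      have hpi := Real.pi_lt_d2
      have hpi3 := Real.pi_gt_three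
      rw [abs_lt]; constructor <;> nlinarith
    have hnum : (|r.num| : ℝ) ≤ 5 * B := by
      have hdenB : (r.den : ℝ) ≤ B := by exact_mod_cast hden
      have habs : (|r.num| : ℝ) = |(r : ℝ)| * r.den := by
        rw [Rat.cast_def, abs_div, Nat.abs_cast]
        push_cast
        field_simp
      rw [habs]
      nlinarith [abs_nonneg (r : ℝ)]
    exact_mod_cast hnum
  obtain ⟨r, ⟨hpos, hlt⟩, hqB⟩ := hex
  set q : ℕ := r.den with hqdef
  set Q : ℝ := (q : ℝ) with hQ
  have hQ1 : (1 : ℝ) ≤ Q := by rw [hQ]; exact_mod_cast r.pos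
  have hQ0 : (0 : ℝ) < Q := by linarith
  have hpow1 : (1 : ℝ) ≤ Q ^ ((2:ℝ) + ε) := Real.one_le_rpow hQ1 (by linarith)
  have hlt1 : |Real.pi - (r : ℝ)| < 1 := lt_of_lt_of_le hlt (by
    rw [div_le_one (by linarith)]; exact hpow1)
  have hr2 : (2 : ℝ) < (r : ℝ) := by
    have := (abs_lt.1 hlt1).2
    have hpi3 := Real.pi_gt_three
    linarith
  have hr5 : (r : ℝ) < 5 := by
    have := (abs_lt.1 hlt1).1
    have hpi := Real.pi_lt_d2
    linarith
  set p : ℤ := r.num with hpdef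
  have hrpq : (r : ℝ) = (p : ℝ) / Q := by rw [Rat.cast_def]
  have hrQ : (r : ℝ) * Q = (p : ℝ) := by rw [hrpq]; field_simp
  clear_value q Q p
  have hp2Q : 2 * Q < (p : ℝ) := by nlinarith
  have hp5Q : (p : ℝ) < 5 * Q := by nlinarith
  have hppos : (0 : ℝ) < (p : ℝ) := by linarith
  set n : ℕ := p.toNat with hn
  have hnR : (n : ℝ) = (p : ℝ) := by
    rw [hn]
    rw [show ((p.toNat : ℕ) : ℝ) = ((p.toNat : ℤ) : ℝ) by push_cast; ring]
    rw [Int.toNat_of_nonneg (by exact_mod_cast hppos.le)]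
  clear_value n
  set d : ℝ := (p : ℝ) - Q * Real.pi with hd
  have hdabs : |d| = Q * |Real.pi - (r : ℝ)| := by
    have hdeq : d = -(Q * (Real.pi - (r : ℝ))) := by
      rw [hd, hrpq]; field_simp; ring
    rw [hdeq, abs_neg, abs_mul, abs_of_pos hQ0]
  clear_value d
  have hQsplit : Q ^ ((2:ℝ) + ε) = Q * Q ^ ((1:ℝ) + ε) := by
    rw [show (2:ℝ) + ε = 1 + (1 + ε) by ring, Real.rpow_add hQ0, Real.rpow_one]
  have hpow1e : (1 : ℝ) ≤ Q ^ ((1:ℝ) + ε) := Real.one_le_rpow hQ1 (by linarith)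
  have hdlt : |d| < 1 / Q ^ ((1:ℝ) + ε) := by
    rw [hdabs]
    calc Q * |Real.pi - (r : ℝ)| < Q * (1 / Q ^ ((2:ℝ) + ε)) :=
          mul_lt_mul_of_pos_left hlt hQ0
      _ = 1 / Q ^ ((1:ℝ) + ε) := by
          rw [hQsplit]
          field_simp
  have hd1 : |d| ≤ 1 := by
    have : 1 / Q ^ ((1:ℝ) + ε) ≤ 1 := by
      rw [div_le_one (by linarith)]; exact hpow1e
    linarith
  have hcosp : |Real.cos (n : ℝ)| = |Real.cos d| := by
    have heq : (n : ℝ) = d + ((q : ℤ) : ℝ) * Real.pi := by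
      rw [hnR, hd, hQ]; push_cast; ring
    rw [heq, Real.cos_add_int_mul_pi, abs_mul]
    simp
  have hcoslb : 1 - d ^ 2 / 2 ≤ |Real.cos (n : ℝ)| := by
    rw [hcosp]
    exact le_trans Real.one_sub_sq_div_two_le_cos (le_abs_self _)
  set m : ℕ := n ^ 2 with hm
  clear_value m
  have hd2le1 : d ^ 2 ≤ 1 := by nlinarith [abs_nonneg d, sq_abs d]
  have hbase0 : (0 : ℝ) ≤ 1 - d ^ 2 / 2 := by linarith
  have hfn : 1 - (m : ℝ) * (d ^ 2 / 2) ≤ f n := by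
    have h1 : (1 - d ^ 2 / 2) ^ m ≤ |Real.cos (n : ℝ)| ^ m :=
      pow_le_pow_left₀ hbase0 hcoslb m
    have h2 : 1 + (m : ℝ) * (-(d ^ 2 / 2)) ≤ (1 + -(d ^ 2 / 2)) ^ m :=
      one_add_mul_le_pow (by nlinarith) m
    have h3 : f n = |Real.cos (n : ℝ)| ^ m := by rw [hfpow n, hm]
    rw [h3]
    have h4 : (1 + -(d ^ 2 / 2)) ^ m = (1 - d ^ 2 / 2) ^ m := by ring_nf
    linarith [h4 ▸ h2, h1]
  have hmlt : (m : ℝ) < 25 * Q ^ 2 := by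
    have hn5 : (n : ℝ) < 5 * Q := by rw [hnR]; exact hp5Q
    have hn0 : (0 : ℝ) ≤ (n : ℝ) := Nat.cast_nonneg n
    rw [hm]; push_cast; nlinarith
  set P : ℝ := Q ^ (2 * ε) with hP
  clear_value P
  have hP0 : (0 : ℝ) < P := by rw [hP]; exact Real.rpow_pos_of_pos hQ0 _
  have hsplit2 : Q ^ ((2:ℝ) + 2 * ε) = Q ^ 2 * P := by
    rw [Real.rpow_add hQ0, hP]
    congr 1
    rw [show ((2:ℝ)) = ((2:ℕ) : ℝ) by norm_num, Real.rpow_natCast]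
  have hd2 : d ^ 2 < 1 / (Q ^ 2 * P) := by
    have h1 : d ^ 2 < (1 / Q ^ ((1:ℝ) + ε)) ^ 2 := by
      nlinarith [abs_nonneg d, sq_abs d]
    have h2 : (1 / Q ^ ((1:ℝ) + ε)) ^ 2 = 1 / (Q ^ 2 * P) := by
      rw [div_pow, one_pow, ← hsplit2,
        ← Real.rpow_natCast (Q ^ ((1:ℝ) + ε)) 2, ← Real.rpow_mul hQ0.le]
      norm_num
      ring_nf
    rw [← h2]; exact h1
  have hQ2P : (0 : ℝ) < Q ^ 2 * P := by positivity
  have hmd : (m : ℝ) * (d ^ 2 / 2) < 25 / (2 * P) := by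
    have h1 : (m : ℝ) * d ^ 2 ≤ 25 * Q ^ 2 * d ^ 2 := by
      nlinarith [sq_nonneg d, (Nat.cast_nonneg m : (0:ℝ) ≤ (m:ℝ))]
    have h2 : 25 * Q ^ 2 * d ^ 2 < 25 * Q ^ 2 * (1 / (Q ^ 2 * P)) := by
      have : (0:ℝ) < 25 * Q ^ 2 := by positivity
      exact mul_lt_mul_of_pos_left hd2 this
    have h3 : 25 * Q ^ 2 * (1 / (Q ^ 2 * P)) = 25 / P := by
      field_simp
    have h4 : (m : ℝ) * d ^ 2 < 25 / P := by linarith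
    have h5 : 25 / (2 * P) = (25 / P) / 2 := by field_simp
    rw [h5]
    linarith
  -- q ≥ B₁ so 25/(2*(1-c)) < P
  have hqB₁ : B₁ ≤ q := le_trans (le_trans (le_max_left B₁ N) (le_of_lt hqB)) (le_refl q)
  have hKP : 25 / (2 * (1 - c)) < P := by rw [hP, hQ]; exact hB₁ q hqB₁
  have h1c : (0 : ℝ) < 1 - c := by linarith
  have hmd2 : 25 / (2 * P) < 1 - c := by
    rw [div_lt_iff₀ (by positivity)] at hKP ⊢
    nlinarith
  have hfngt : c < f n := by
    have : (m : ℝ) * (d ^ 2 / 2) < 1 - c := lt_trans hmd hmd2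
    linarith
  have hnN : N ≤ n := by
    have hqn : (Q : ℝ) < (n : ℝ) := by rw [hnR]; nlinarith
    rw [hQ] at hqn
    have : q < n := by exact_mod_cast hqn
    have : N ≤ B := le_max_right B₁ N
    omega
  exact absurd (hN n hnN) (not_lt.2 hfngt.le)

/-- If `limsup |cos n| ^ (n²) ≠ 1`, then `μ(π) = 2`; that is, for every `ε > 0` only
finitely many rationals `p/q` satisfy `0 < |π - p/q| < 1/q^(2+ε)`. -/
theorem mu_pi_eq_two_of_limsup_ne_one
    (h : Filter.limsup (fun n : ℕ => |Real.cos n| ^ ((n : ℝ) ^ 2)) Filter.atTop ≠ 1) :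
    irrationalityMeasure Real.pi = 2 ∧
      ∀ ε : ℝ, 0 < ε →
        {r : ℚ | 0 < |Real.pi - (r : ℝ)| ∧
          |Real.pi - (r : ℝ)| < 1 / (r.den : ℝ) ^ (2 + ε)}.Finite := by
  have key : ∀ ε : ℝ, 0 < ε →
      {r : ℚ | 0 < |Real.pi - (r : ℝ)| ∧
        |Real.pi - (r : ℝ)| < 1 / (r.den : ℝ) ^ (2 + ε)}.Finite :=
    fun ε hε => key_finite h hε
  refine ⟨?_, key⟩
  set M : Set ℝ := {μ : ℝ |
    {r : ℚ | 0 < |Real.pi - (r : ℝ)| ∧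
      |Real.pi - (r : ℝ)| < 1 / (r.den : ℝ) ^ μ}.Finite} with hM
  have hub : ∀ δ : ℝ, 0 < δ → (2 + δ) ∈ M := fun δ hδ => key δ hδ
  have hlb : ∀ μ ∈ M, (2 : ℝ) ≤ μ := by
    intro μ hμ
    by_contra hlt
    push_neg at hlt
    have hinf := Real.infinite_rat_abs_sub_lt_one_div_den_sq_of_irrational irrational_pi
    refine (Set.Infinite.mono ?_ hinf) hμ
    intro r hr
    simp only [Set.mem_setOf_eq] at hr ⊢
    have hq1 : (1 : ℝ) ≤ (r.den : ℝ) := by exact_mod_cast r.pos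
    have hne : Real.pi ≠ (r : ℝ) := (irrational_pi.ne_rat r)
    refine ⟨abs_pos.2 (sub_ne_zero.2 hne), ?_⟩
    have h1 : (r.den : ℝ) ^ μ ≤ (r.den : ℝ) ^ (2 : ℝ) :=
      Real.rpow_le_rpow_of_exponent_le hq1 hlt.le
    have h2 : (r.den : ℝ) ^ (2 : ℝ) = (r.den : ℝ) ^ (2 : ℕ) := by
      rw [show ((2:ℝ)) = ((2:ℕ) : ℝ) by norm_num, Real.rpow_natCast]
    have h3 : (0 : ℝ) < (r.den : ℝ) ^ μ := Real.rpow_pos_of_pos (by linarith) _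
    calc |Real.pi - (r : ℝ)| < 1 / (r.den : ℝ) ^ (2:ℕ) := hr
      _ ≤ 1 / (r.den : ℝ) ^ μ := by
          apply one_div_le_one_div_of_le h3
          rw [← h2]; exact h1
  have hne : M.Nonempty := ⟨2 + 1, hub 1 one_pos⟩
  have hbdd : BddBelow M := ⟨2, hlb⟩
  rw [irrationalityMeasure]
  apply le_antisymm
  · by_contra h2
    push_neg at h2
    have hδ : sInf M ≤ 2 + (sInf M - 2) / 2 :=
      csInf_le hbdd (hub _ (by linarith))
    rw [hM] at hδ
    linarith
  · exact le_csInf hne hlb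
end

section
/- Let m ≥ 2 be a real number and suppose there are infinitely many pairs of positive integers (p, q) with 0 < |π − p/q| < 1/q^m. Then for every real γ with 0 ≤ γ < 2(m − 1), one has limsup_{k→∞} |cos k|^(k^γ) = 1, where k ranges over the positive integers. -/
open Filter Real

/-- If `π` admits infinitely many rational approximations `p/q` with
`0 < |π - p/q| < 1/q^m` (with `m ≥ 2`), then for all `0 ≤ γ < 2(m-1)` we have
`limsup_{k → ∞} |cos k| ^ (k ^ γ) = 1`. -/
theorem limsup_eq_one_of_approx (m : ℝ) (hm : 2 ≤ m)
    (h : {pq : ℕ × ℕ | 0 < pq.1 ∧ 0 < pq.2 ∧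
        0 < |Real.pi - (pq.1 : ℝ) / (pq.2 : ℝ)| ∧
        |Real.pi - (pq.1 : ℝ) / (pq.2 : ℝ)| < 1 / (pq.2 : ℝ) ^ m}.Infinite) :
    ∀ γ : ℝ, 0 ≤ γ → γ < 2 * (m - 1) →
      Filter.limsup (fun k : ℕ => |Real.cos k| ^ ((k : ℝ) ^ γ)) Filter.atTop = 1 := by
  intro γ hγ0 hγ
  set S := {pq : ℕ × ℕ | 0 < pq.1 ∧ 0 < pq.2 ∧
        0 < |Real.pi - (pq.1 : ℝ) / (pq.2 : ℝ)| ∧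
        |Real.pi - (pq.1 : ℝ) / (pq.2 : ℝ)| < 1 / (pq.2 : ℝ) ^ m} with hS
  set f : ℕ → ℝ := fun k => |Real.cos k| ^ ((k : ℝ) ^ γ) with hfdef
  have hf_le_one : ∀ k, f k ≤ 1 := fun k =>
    Real.rpow_le_one (abs_nonneg _) (Real.abs_cos_le_one _)
      (Real.rpow_nonneg (Nat.cast_nonneg k) γ)
  have hf_nonneg : ∀ k, 0 ≤ f k := fun k => Real.rpow_nonneg (abs_nonneg _) _
  have hbdd : IsBoundedUnder (· ≤ ·) atTop f := isBoundedUnder_of ⟨1, hf_le_one⟩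
  have hcobdd : IsCoboundedUnder (· ≤ ·) atTop f :=
    Filter.isCoboundedUnder_le_of_le atTop hf_nonneg
  have hle : limsup f atTop ≤ 1 := limsup_le_of_le hcobdd (Eventually.of_forall hf_le_one)
  -- p is bounded in terms of q for members of S
  have hpq_bound : ∀ pq : ℕ × ℕ, pq ∈ S →
      2 * (pq.2 : ℝ) < (pq.1 : ℝ) ∧ (pq.1 : ℝ) < 5 * (pq.2 : ℝ) := by
    rintro ⟨p, q⟩ ⟨hp0, hq0, -, hlt⟩
    have hqR : (1 : ℝ) ≤ (q : ℝ) := by exact_mod_cast hq0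
    have hqpos : (0 : ℝ) < (q : ℝ) := by linarith
    have hqm : (1 : ℝ) ≤ (q : ℝ) ^ m := Real.one_le_rpow hqR (by linarith)
    have h1 : (1 : ℝ) / (q : ℝ) ^ m ≤ 1 := by
      rw [div_le_one (by linarith)]; exact hqm
    have habs := abs_lt.1 (lt_of_lt_of_le hlt h1)
    have hpi := Real.pi_gt_three
    have hpi2 := Real.pi_lt_d2
    constructor
    · rw [← lt_div_iff₀ hqpos] at *
      nlinarith [habs.2]
    · rw [← div_lt_iff₀ hqpos]
      nlinarith [habs.1]
  -- q-values are unbounded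
  have hq_unbdd : ∀ B : ℕ, ∃ pq ∈ S, B ≤ pq.2 := by
    intro B
    by_contra hcon
    push_neg at hcon
    apply h
    apply Set.Finite.subset (Set.finite_Iic ((5 * B, B) : ℕ × ℕ))
    rintro ⟨p, q⟩ hpq
    have hq : q < B := hcon (p, q) hpq
    have hp := (hpq_bound (p, q) hpq).2
    have hpB : (p : ℝ) < 5 * B := by
      have : (q : ℝ) ≤ B := by exact_mod_cast hq.le
      linarith
    have hpB' : p ≤ 5 * B := by exact_mod_cast hpB.le
    exact ⟨by simpa using hpB', by simpa using hq.le⟩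
  -- the key frequently statement
  have key : ∀ a : ℝ, a < 1 → ∃ᶠ k in atTop, a ≤ f k := by
    intro a ha
    rw [frequently_atTop]
    intro N
    have hexp : γ + (2 - 2 * m) < 0 := by linarith
    have htend : Tendsto (fun x : ℝ => (5:ℝ) ^ γ / 2 * x ^ (γ + (2 - 2*m))) atTop (nhds 0) := by
      have h1 := (tendsto_rpow_neg_atTop (y := -(γ + (2 - 2*m))) (by linarith)).const_mul
        ((5:ℝ) ^ γ / 2)
      simpa using h1
    have hev : ∀ᶠ x : ℝ in atTop, (5:ℝ) ^ γ / 2 * x ^ (γ + (2 - 2*m)) < 1 - a := by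
      have : Set.Iio (1 - a) ∈ nhds (0:ℝ) := Iio_mem_nhds (by linarith)
      exact htend.eventually_mem this
    obtain ⟨X, hX⟩ := eventually_atTop.1 hev
    obtain ⟨⟨p, q⟩, hmem, hqB⟩ := hq_unbdd (max N ⌈X⌉₊ + 1)
    have hpb := hpq_bound (p, q) hmem
    obtain ⟨hp0, hq0, -, hlt⟩ := hmem
    simp only at hpb hlt hqB ⊢
    have hqR : (1 : ℝ) ≤ (q : ℝ) := by exact_mod_cast hq0
    have hqpos : (0 : ℝ) < (q : ℝ) := by linarith
    have hqX : X ≤ (q : ℝ) := by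
      have h1 : (⌈X⌉₊ : ℝ) ≤ (q : ℝ) := by
        exact_mod_cast le_trans (le_trans (le_max_right N ⌈X⌉₊) (Nat.le_succ _)) hqB
      exact le_trans (Nat.le_ceil X) h1
    have hpq : q ≤ p := by
      have : (q : ℝ) ≤ (p : ℝ) := by linarith [hpb.1]
      exact_mod_cast this
    have hNp : N ≤ p :=
      le_trans (le_trans (le_max_left N ⌈X⌉₊) (Nat.le_succ _)) (le_trans hqB hpq)
    refine ⟨p, hNp, ?_⟩
    -- the distance to the nearest multiple of π
    set e : ℝ := q * Real.pi - p with he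
    have hcosp : |Real.cos p| = |Real.cos e| := by
      have h1 : Real.cos ((q : ℝ) * Real.pi - e) = (-1) ^ q * Real.cos e :=
        Real.cos_nat_mul_pi_sub e q
      have h2 : (q : ℝ) * Real.pi - e = p := by rw [he]; ring
      rw [h2] at h1
      rw [h1, abs_mul, abs_pow, abs_neg, abs_one, one_pow, one_mul]
    have heq : e = (q : ℝ) * (Real.pi - (p : ℝ) / (q : ℝ)) := by
      rw [he]; field_simp
    have habse : |e| < (q : ℝ) ^ ((1:ℝ) - m) := by
      rw [heq, abs_mul, abs_of_pos hqpos]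
      calc (q:ℝ) * |Real.pi - (p : ℝ) / (q : ℝ)| < (q:ℝ) * (1 / (q : ℝ) ^ m) := by
            exact (mul_lt_mul_iff_right₀ hqpos).2 hlt
        _ = (q : ℝ) ^ ((1:ℝ) - m) := by
            rw [Real.rpow_sub hqpos, Real.rpow_one, mul_one_div]
    have hesq : e ^ 2 < (q : ℝ) ^ ((2:ℝ) - 2 * m) := by
      have h1 : |e| ^ 2 < ((q : ℝ) ^ ((1:ℝ) - m)) ^ 2 :=
        pow_lt_pow_left₀ habse (abs_nonneg e) two_ne_zero
      rw [sq_abs] at h1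
      calc e ^ 2 < ((q : ℝ) ^ ((1:ℝ) - m)) ^ 2 := h1
        _ = (q : ℝ) ^ ((2:ℝ) - 2 * m) := by
            rw [← Real.rpow_natCast ((q:ℝ) ^ ((1:ℝ)-m)) 2, ← Real.rpow_mul hqpos.le]
            norm_num; ring_nf
    set x : ℝ := (q : ℝ) ^ ((2:ℝ) - 2 * m) / 2 with hx
    have hx0 : 0 ≤ x := by positivity
    have hxhalf : x ≤ 1 / 2 := by
      have : (q : ℝ) ^ ((2:ℝ) - 2 * m) ≤ 1 :=
        Real.rpow_le_one_of_one_le_of_nonpos hqR (by linarith)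
      rw [hx]; linarith
    have hcos_lb : 1 - x ≤ |Real.cos p| := by
      rw [hcosp]
      calc 1 - x ≤ 1 - e ^ 2 / 2 := by
            have h2 := hesq.le
            rw [hx]; ring_nf at h2 ⊢; linarith
        _ ≤ Real.cos e := Real.one_sub_sq_div_two_le_cos
        _ ≤ |Real.cos e| := le_abs_self _
    -- the exponent
    set t : ℝ := (p : ℝ) ^ γ with ht
    have hpR : (1 : ℝ) ≤ (p : ℝ) := by exact_mod_cast hp0
    have ht1 : 1 ≤ t := Real.one_le_rpow hpR hγ0
    have hfp : (1 - x) ^ t ≤ f p :=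
      Real.rpow_le_rpow (by linarith) hcos_lb (by linarith)
    have hbern : 1 - t * x ≤ (1 - x) ^ t := by
      have := one_add_mul_self_le_rpow_one_add (s := -x) (by linarith) ht1
      simpa [sub_eq_add_neg, mul_neg] using this
    have htx : t * x < 1 - a := by
      have ht5 : t ≤ (5 * (q:ℝ)) ^ γ :=
        Real.rpow_le_rpow (Nat.cast_nonneg p) (by linarith [hpb.2]) hγ0
      have h5 : ((5:ℝ) * (q:ℝ)) ^ γ = (5:ℝ) ^ γ * (q:ℝ) ^ γ :=
        Real.mul_rpow (by norm_num) hqpos.le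
      have hcomb : t * x ≤ (5:ℝ) ^ γ / 2 * (q:ℝ) ^ (γ + (2 - 2*m)) := by
        rw [hx, Real.rpow_add hqpos]
        calc t * ((q:ℝ) ^ ((2:ℝ) - 2*m) / 2)
            ≤ (5:ℝ) ^ γ * (q:ℝ) ^ γ * ((q:ℝ) ^ ((2:ℝ) - 2*m) / 2) := by
              apply mul_le_mul_of_nonneg_right (h5 ▸ ht5)
              positivity
          _ = (5:ℝ) ^ γ / 2 * ((q:ℝ) ^ γ * (q:ℝ) ^ ((2:ℝ) - 2*m)) := by ring
      exact lt_of_le_of_lt hcomb (hX (q:ℝ) hqX)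
    calc a = 1 - (1 - a) := by ring
      _ ≤ 1 - t * x := by linarith
      _ ≤ (1 - x) ^ t := hbern
      _ ≤ f p := hfp
  -- conclude
  have h1le : 1 ≤ limsup f atTop := by
    by_contra hcon
    push_neg at hcon
    have ha : (limsup f atTop + 1) / 2 < 1 := by linarith
    have := le_limsup_of_frequently_le (key _ ha) hbdd
    linarith
  linarith
end

section
/- Let s > 0 be a real number and suppose there exists a positive integer N such that |p − qπ| > 1/q^s for all integers p, q > N. Then for every real γ with γ > 2s, the sequence |cos k|^(k^γ) (k ranging over the positive integers) tends to 0 as k → ∞; in particular limsup_{k→∞} |cos k|^(k^γ) = 0. -/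
/-!
Write `k = mπ + d` with `m = round (k / π)`, so `|d| ≤ π / 2`. For large `k` we have
`N < m ≤ k`, so the Diophantine bound gives `|d| > m ^ (-s) ≥ k ^ (-s)`, and the bound
`cos d ≤ 1 - 2d² / π²` yields `|cos k| ^ (k ^ γ) ≤ exp (-(2 / π²) d² k ^ γ) ≤ exp (-(2 / π²) k ^ (γ - 2s))`,
which tends to `0` since `γ > 2s`.
-/

open Filter Real Topology

lemma abs_sub_round_div_mul_le {α : Type*} [Field α] [LinearOrder α] [IsStrictOrderedRing α]
    [FloorRing α] (x : α) {c : α} (hc : 0 < c) : |x - round (x / c) * c| ≤ c / 2 := by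
  have h : x - round (x / c) * c = c * (x / c - round (x / c)) := by field_simp
  rw [h, abs_mul, abs_of_pos hc]
  linarith [mul_le_mul_of_nonneg_left (abs_sub_round (x / c)) hc.le]

namespace Real

lemma abs_cos_sub_int_mul_pi (x : ℝ) (m : ℤ) : |cos (x - m * π)| = |cos x| := by
  rw [cos_sub_int_mul_pi, abs_mul, abs_neg_one_zpow, one_mul]

lemma abs_cos_le_exp_neg_sq {x : ℝ} (hx : |x| ≤ π / 2) :
    |cos x| ≤ exp (-(2 / π ^ 2 * x ^ 2)) := by
  obtain ⟨hl, hu⟩ := abs_le.mp hx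
  rw [abs_of_nonneg (cos_nonneg_of_neg_pi_div_two_le_of_le hl hu)]
  calc cos x ≤ 1 - 2 / π ^ 2 * x ^ 2 := cos_le_one_sub_mul_cos_sq (by linarith [pi_pos])
    _ ≤ exp (-(2 / π ^ 2 * x ^ 2)) := by linarith [add_one_le_exp (-(2 / π ^ 2 * x ^ 2))]

lemma abs_cos_le_exp_neg_sq_sub_round (x : ℝ) :
    |cos x| ≤ exp (-(2 / π ^ 2 * (x - round (x / π) * π) ^ 2)) := by
  rw [← abs_cos_sub_int_mul_pi x (round (x / π))]
  exact abs_cos_le_exp_neg_sq (abs_sub_round_div_mul_le x pi_pos)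

lemma abs_cos_rpow_le {x ε a : ℝ} (hε : 0 ≤ ε) (hεx : ε ≤ |x - round (x / π) * π|)
    (ha : 0 ≤ a) : |cos x| ^ a ≤ exp (-(2 / π ^ 2 * ε ^ 2 * a)) := by
  set d := x - round (x / π) * π
  have hεd : ε ^ 2 ≤ d ^ 2 := by simpa only [sq_abs] using pow_le_pow_left₀ hε hεx 2
  calc |cos x| ^ a ≤ exp (-(2 / π ^ 2 * d ^ 2)) ^ a :=
        rpow_le_rpow (abs_nonneg _) (abs_cos_le_exp_neg_sq_sub_round x) ha
    _ = exp (-(2 / π ^ 2 * d ^ 2 * a)) := by rw [← exp_mul, neg_mul]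
    _ ≤ exp (-(2 / π ^ 2 * ε ^ 2 * a)) := by gcongr

lemma natCast_lt_round_div_pi {x : ℝ} {N : ℕ} (hx : π * (N + 1) ≤ x) :
    (N : ℤ) < round (x / π) := by
  have hN : (N : ℝ) + 1 ≤ x / π := by rwa [le_div_iff₀ pi_pos, mul_comm]
  have := (abs_le.mp (abs_sub_round (x / π))).2
  exact_mod_cast (show (N : ℝ) < round (x / π) by linarith)

lemma round_div_pi_le {x : ℝ} (hx : 1 ≤ x) : (round (x / π) : ℝ) ≤ x := by
  have hxπ : x / π ≤ x / 3 := div_le_div_of_nonneg_left (by linarith) (by norm_num) pi_gt_three.le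
  linarith [(abs_le.mp (abs_sub_round (x / π))).1]

end Real

open Real

lemma eventually_rpow_neg_lt_abs_sub_round_mul_pi {s : ℝ} (hs : 0 ≤ s) {N : ℕ}
    (hD : ∀ p q : ℤ, (N : ℤ) < p → (N : ℤ) < q → 1 / (q : ℝ) ^ s < |(p : ℝ) - (q : ℝ) * π|) :
    ∀ᶠ k : ℕ in atTop, (k : ℝ) ^ (-s) < |(k : ℝ) - round ((k : ℝ) / π) * π| := by
  filter_upwards [tendsto_natCast_atTop_atTop.eventually_ge_atTop (max 1 (π * (N + 1)))]
    with k hk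
  obtain ⟨hk1, hkN⟩ := max_le_iff.mp hk
  set m := round ((k : ℝ) / π)
  have hNm : (N : ℤ) < m := natCast_lt_round_div_pi hkN
  have hm0 : (0 : ℝ) < m := by exact_mod_cast (Int.natCast_nonneg N).trans_lt hNm
  have hNk : (N : ℤ) < k := by
    exact_mod_cast (show (N : ℝ) < k by nlinarith [pi_gt_three, (Nat.cast_nonneg N : (0 : ℝ) ≤ N)])
  calc (k : ℝ) ^ (-s) ≤ (m : ℝ) ^ (-s) :=
        rpow_le_rpow_of_nonpos hm0 (round_div_pi_le hk1) (neg_nonpos.mpr hs)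
    _ = 1 / (m : ℝ) ^ s := by rw [rpow_neg hm0.le, one_div]
    _ < |(k : ℝ) - m * π| := by simpa using hD k m hNk hNm

lemma sq_rpow_neg_mul_rpow {x : ℝ} (hx : 0 < x) (s γ : ℝ) :
    (x ^ (-s)) ^ 2 * x ^ γ = x ^ (γ - 2 * s) := by
  rw [← rpow_natCast, ← rpow_mul hx.le, ← rpow_add hx]
  ring_nf

/-- If there is a positive integer `N` with `|p - qπ| > 1/q^s` for all integers
`p, q > N`, then for every `γ > 2s` the sequence `|cos k| ^ (k ^ γ)` tends to `0`;
in particular its limsup is `0`. -/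
theorem tendsto_zero_of_diophantine_bound (s : ℝ) (hs : 0 < s)
    (h : ∃ N : ℕ, 0 < N ∧ ∀ p q : ℤ, (N : ℤ) < p → (N : ℤ) < q →
        1 / (q : ℝ) ^ s < |(p : ℝ) - (q : ℝ) * Real.pi|) :
    ∀ γ : ℝ, 2 * s < γ →
      Filter.Tendsto (fun k : ℕ => |Real.cos k| ^ ((k : ℝ) ^ γ)) Filter.atTop (nhds 0) ∧
      Filter.limsup (fun k : ℕ => |Real.cos k| ^ ((k : ℝ) ^ γ)) Filter.atTop = 0 := by
  intro γ hγ
  obtain ⟨N, -, hD⟩ := h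
  have hbound : Tendsto (fun k : ℕ => exp (-(2 / π ^ 2 * (k : ℝ) ^ (γ - 2 * s)))) atTop (𝓝 0) :=
    tendsto_exp_neg_atTop_nhds_zero.comp <|
      ((tendsto_rpow_atTop (by linarith)).comp tendsto_natCast_atTop_atTop).const_mul_atTop
        (by positivity)
  have hcos : Tendsto (fun k : ℕ => |cos k| ^ ((k : ℝ) ^ γ)) atTop (𝓝 0) := by
    refine squeeze_zero' (.of_forall fun k => rpow_nonneg (abs_nonneg _) _) ?_ hbound
    filter_upwards [eventually_rpow_neg_lt_abs_sub_round_mul_pi hs.le hD,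
      eventually_gt_atTop 0] with k hk hk_pos
    have hk0 : (0 : ℝ) < k := Nat.cast_pos.mpr hk_pos
    calc |cos k| ^ ((k : ℝ) ^ γ)
        ≤ exp (-(2 / π ^ 2 * ((k : ℝ) ^ (-s)) ^ 2 * (k : ℝ) ^ γ)) :=
          abs_cos_rpow_le (rpow_nonneg hk0.le _) hk.le (rpow_nonneg hk0.le _)
      _ = exp (-(2 / π ^ 2 * (k : ℝ) ^ (γ - 2 * s))) := by
          rw [mul_assoc, sq_rpow_neg_mul_rpow hk0]
  exact ⟨hcos, hcos.limsup_eq⟩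
end

section
/- limsup_{n→∞} |cos n|^(n²) ≥ exp(−π²/2), where n ranges over the positive integers. -/
open Filter Real Topology

/-! If `|k π - n| < 1 / k` then `|cos n| = |cos (n - k π)| ≥ 1 - 1 / (2 k²)` and `n < k π + 1 / k`,
so `|cos n| ^ n² ≥ (1 - 1 / (2 k²)) ^ (k π + 1 / k)²`, and the right-hand side tends to
`exp (-π² / 2)` as `k → ∞`. Since `π` is irrational, Dirichlet's theorem supplies such pairs
`(n, k)` with `k` arbitrarily large. -/

theorem Irrational.exists_rat_abs_sub_lt_one_div_den_sq_and_lt_den {ξ : ℝ} (hξ : Irrational ξ)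
    (B : ℕ) : ∃ q : ℚ, |ξ - q| < 1 / (q.den : ℝ) ^ 2 ∧ B < q.den := by
  obtain ⟨ε, hfar, hε⟩ := ((hξ.eventually_forall_le_dist_cast_rat_of_den_le B).filter_mono
    nhdsWithin_le_nhds |>.and (self_mem_nhdsWithin (s := Set.Ioi 0))).exists
  obtain ⟨q₀, hξq₀, hq₀ε⟩ := exists_rat_btwn (lt_add_of_pos_right ξ hε)
  obtain ⟨q, hq, hqq₀⟩ := Real.exists_rat_abs_sub_lt_and_lt_of_irrational hξ q₀
  refine ⟨q, hq, not_le.1 fun hden => ?_⟩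
  have hq₀ : |ξ - q₀| < ε := by rw [abs_sub_lt_iff]; constructor <;> linarith
  linarith [hfar q hden, Real.dist_eq ξ q]

theorem Irrational.exists_int_abs_mul_sub_lt_one_div {ξ : ℝ} (hξ : Irrational ξ) (B : ℕ) :
    ∃ (p : ℤ) (k : ℕ), B < k ∧ |k * ξ - p| < 1 / k := by
  obtain ⟨q, hq, hB⟩ := hξ.exists_rat_abs_sub_lt_one_div_den_sq_and_lt_den B
  have hk : (0 : ℝ) < q.den := by exact_mod_cast q.pos
  refine ⟨q.num, q.den, hB, ?_⟩
  calc |q.den * ξ - q.num| = q.den * |ξ - q| := by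
        rw [← abs_of_pos hk, ← abs_mul, abs_of_pos hk, Rat.cast_def]
        congr 1; field_simp
    _ < q.den * (1 / q.den ^ 2) := by gcongr
    _ = 1 / q.den := by field_simp

theorem one_sub_sq_div_two_le_abs_cos (x : ℝ) (k : ℤ) : 1 - (x - k * π) ^ 2 / 2 ≤ |cos x| := by
  calc 1 - (x - k * π) ^ 2 / 2 ≤ cos (x - k * π) := one_sub_sq_div_two_le_cos
    _ ≤ |cos (x - k * π)| := le_abs_self _
    _ = |cos x| := by rw [cos_sub_int_mul_pi, abs_mul, abs_neg_one_zpow, one_mul]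

theorem rpow_le_abs_cos_rpow_sq {n k : ℕ} (hk : 0 < k) (hnk : |k * π - n| < 1 / k) :
    (1 - 1 / (2 * (k : ℝ) ^ 2)) ^ ((k * π + 1 / k) ^ 2) ≤ |cos n| ^ ((n : ℝ) ^ 2) := by
  have hk1 : (1 : ℝ) ≤ k := by exact_mod_cast hk
  have hsmall : 1 / (2 * (k : ℝ) ^ 2) ≤ 1 / 2 := by gcongr; nlinarith
  have hsmall_pos : 0 < 1 / (2 * (k : ℝ) ^ 2) := by positivity
  have hbase : 1 - 1 / (2 * (k : ℝ) ^ 2) ≤ |cos n| := by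
    have hsq : ((n : ℝ) - k * π) ^ 2 < (1 / k) ^ 2 := by
      rw [abs_sub_comm] at hnk; exact sq_lt_sq' (abs_lt.1 hnk).1 (abs_lt.1 hnk).2
    have := one_sub_sq_div_two_le_abs_cos n k
    push_cast at this
    have : (1 / (k : ℝ)) ^ 2 / 2 = 1 / (2 * k ^ 2) := by ring
    linarith
  have hexp : (n : ℝ) ^ 2 ≤ (k * π + 1 / k) ^ 2 := by
    gcongr
    linarith [(abs_lt.1 hnk).1]
  calc (1 - 1 / (2 * (k : ℝ) ^ 2)) ^ ((k * π + 1 / k) ^ 2)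
      ≤ (1 - 1 / (2 * (k : ℝ) ^ 2)) ^ ((n : ℝ) ^ 2) :=
        rpow_le_rpow_of_exponent_ge (by linarith) (by linarith) hexp
    _ ≤ |cos n| ^ ((n : ℝ) ^ 2) := rpow_le_rpow (by linarith) hbase (sq_nonneg _)

theorem tendsto_one_sub_one_div_two_sq_rpow (a : ℝ) :
    Tendsto (fun x : ℝ => (1 - 1 / (2 * x ^ 2)) ^ ((x * a + 1 / x) ^ 2)) atTop
      (𝓝 (exp (-a ^ 2 / 2))) := by
  have hsq : Tendsto (fun x : ℝ => x ^ 2) atTop atTop := tendsto_pow_atTop two_ne_zero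
  have hbase := (tendsto_one_add_div_rpow_exp (-1 / 2)).comp hsq
  have hexp : Tendsto (fun x : ℝ => (a + 1 / x ^ 2) ^ 2) atTop (𝓝 (a ^ 2)) := by
    simpa using (tendsto_const_nhds (x := a) |>.add
      ((tendsto_const_nhds (x := (1 : ℝ))).div_atTop hsq)).pow 2
  -- `(1 - 1 / (2 x²)) ^ (x a + 1 / x)² = ((1 - 1 / (2 x²)) ^ x²) ^ (a + 1 / x²)²`
  have hlim := hbase.rpow hexp (Or.inl (exp_pos _).ne')
  rw [← exp_mul, show -1 / 2 * a ^ 2 = -a ^ 2 / 2 by ring] at hlim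
  refine hlim.congr' ?_
  filter_upwards [eventually_ge_atTop 1] with x hx
  have hx0 : x ≠ 0 := by positivity
  simp only [Function.comp_apply]
  have hbase_nonneg : 0 ≤ 1 + -1 / 2 / x ^ 2 := by
    have : 1 / 2 / x ^ 2 ≤ 1 / 2 := div_le_self (by norm_num) (one_le_pow₀ hx)
    linarith [neg_div (x ^ 2) (1 / 2 : ℝ)]
  rw [← rpow_mul hbase_nonneg]
  congr 1
  · field_simp; ring
  · field_simp

theorem frequently_lt_abs_cos_rpow_sq {c : ℝ} (hc : c < exp (-π ^ 2 / 2)) :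
    ∃ᶠ n : ℕ in atTop, c < |cos n| ^ ((n : ℝ) ^ 2) := by
  obtain ⟨K, hK⟩ := eventually_atTop.1 <|
    ((tendsto_one_sub_one_div_two_sq_rpow π).comp tendsto_natCast_atTop_atTop).eventually
      (eventually_gt_nhds hc)
  refine frequently_atTop.2 fun N => ?_
  obtain ⟨p, k, hk, hpk⟩ := irrational_pi.exists_int_abs_mul_sub_lt_one_div (max N K)
  have hkp : (k : ℤ) ≤ p := by
    have hk1 : (1 : ℝ) ≤ k := by exact_mod_cast (Nat.zero_lt_of_lt hk)
    have : (k : ℝ) ≤ p := by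
      nlinarith [(abs_lt.1 hpk).2, pi_gt_three, (div_le_one (by positivity)).2 hk1]
    exact_mod_cast this
  lift p to ℕ using (Int.natCast_nonneg k).trans hkp
  refine ⟨p, by omega, (hK k (by omega)).trans_le ?_⟩
  exact rpow_le_abs_cos_rpow_sq (by omega) (by simpa using hpk)

/-- `limsup_{n → ∞} |cos n| ^ (n²) ≥ exp (-π²/2)`. -/
theorem limsup_cos_rpow_sq_ge :
    Real.exp (-Real.pi ^ 2 / 2) ≤
      Filter.limsup (fun n : ℕ => |Real.cos n| ^ ((n : ℝ) ^ 2)) Filter.atTop := by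
  have hnonneg (n : ℕ) : 0 ≤ |cos n| ^ ((n : ℝ) ^ 2) := rpow_nonneg (abs_nonneg _) _
  have hle_one (n : ℕ) : |cos n| ^ ((n : ℝ) ^ 2) ≤ 1 :=
    rpow_le_one (abs_nonneg _) (abs_cos_le_one _) (sq_nonneg _)
  rw [le_limsup_iff (isCoboundedUnder_le_of_le atTop hnonneg) (isBoundedUnder_of ⟨1, hle_one⟩)]
  exact fun c hc => frequently_lt_abs_cos_rpow_sq hc
end

section
/- Let m ≥ 1 and γ ≥ 0 be real numbers, and let p, q be positive integers with |p − πq| < 1/q^(m−1). Then |cos p|^(p^γ) > 1 − p^γ/(2·q^(2(m−1))), where the powers are real powers. -/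
open Real

/-- If `|p - πq| < 1/q^(m-1)` for positive integers `p, q` (with `m ≥ 1`, `γ ≥ 0`),
then `|cos p| ^ (p^γ) > 1 - p^γ / (2 q^(2(m-1)))` (real powers). -/
theorem cos_rpow_gt_of_close (m γ : ℝ) (hm : 1 ≤ m) (hγ : 0 ≤ γ)
    (p q : ℕ) (hp : 0 < p) (hq : 0 < q)
    (happrox : |(p : ℝ) - Real.pi * (q : ℝ)| < 1 / (q : ℝ) ^ (m - 1)) :
    |Real.cos p| ^ ((p : ℝ) ^ γ) >
      1 - (p : ℝ) ^ γ / (2 * (q : ℝ) ^ (2 * (m - 1))) := by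
  set x : ℝ := (p : ℝ) - Real.pi * q with hx
  set Q : ℝ := (q : ℝ) ^ (m - 1) with hQ
  have hq1 : (1 : ℝ) ≤ (q : ℝ) := by exact_mod_cast hq
  have hQ1 : (1 : ℝ) ≤ Q := Real.one_le_rpow hq1 (by linarith)
  have hQ0 : (0 : ℝ) < Q := lt_of_lt_of_le one_pos hQ1
  -- |cos p| = |cos x|
  have hcos : |Real.cos p| = |Real.cos x| := by
    have : (p : ℝ) = x + (q : ℕ) * Real.pi := by ring
    rw [this, Real.cos_add_nat_mul_pi, abs_mul, abs_pow, abs_neg, abs_one, one_pow, one_mul]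
  -- x² < 1/Q²
  clear_value x Q
  have hxQ : |x| < 1 / Q := happrox
  have hx2 : x ^ 2 < 1 / Q ^ 2 := by
    have := sq_lt_sq' (by linarith [abs_nonneg x, neg_abs_le x]) hxQ
    calc x ^ 2 ≤ |x| ^ 2 := by rw [sq_abs]
    _ < (1 / Q) ^ 2 := by
        apply sq_lt_sq' _ hxQ
        linarith [abs_nonneg x, div_pos one_pos hQ0]
    _ = 1 / Q ^ 2 := by rw [div_pow, one_pow]
  have hQ2 : (1 : ℝ) ≤ Q ^ 2 := one_le_pow₀ hQ1
  have hx2le1 : x ^ 2 < 1 := lt_of_lt_of_le hx2 (by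
    rw [div_le_one (by positivity)]; exact hQ2)
  -- r := p^γ ≥ 1
  set r : ℝ := (p : ℝ) ^ γ with hr
  have hp1 : (1 : ℝ) ≤ (p : ℝ) := by exact_mod_cast hp
  have hr1 : (1 : ℝ) ≤ r := Real.one_le_rpow hp1 hγ
  have hr0 : (0 : ℝ) < r := lt_of_lt_of_le one_pos hr1
  clear_value r
  -- cos bound
  have hcoslb : 1 - x ^ 2 / 2 ≤ |Real.cos x| :=
    le_trans (Real.one_sub_sq_div_two_le_cos) (le_abs_self _)
  have hbase0 : (0 : ℝ) ≤ 1 - x ^ 2 / 2 := by linarith [hx2le1]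
  -- chain
  have step1 : (1 - x ^ 2 / 2) ^ r ≤ |Real.cos p| ^ r := by
    rw [hcos]
    exact Real.rpow_le_rpow hbase0 hcoslb (le_of_lt hr0)
  have step2 : 1 + r * (-(x ^ 2 / 2)) ≤ (1 - x ^ 2 / 2) ^ r := by
    have := one_add_mul_self_le_rpow_one_add (s := -(x ^ 2 / 2)) (by nlinarith) hr1
    simpa [sub_eq_add_neg] using this
  have hQeq : (q : ℝ) ^ (2 * (m - 1)) = Q ^ 2 := by
    rw [hQ, mul_comm (2:ℝ), Real.rpow_mul (by positivity), Real.rpow_two]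
  have step3 : 1 - r / (2 * Q ^ 2) < 1 + r * (-(x ^ 2 / 2)) := by
    have h1 : r * (x ^ 2) < r * (1 / Q ^ 2) := mul_lt_mul_of_pos_left hx2 hr0
    have h2 : r / (2 * Q ^ 2) = r * (1 / Q ^ 2) / 2 := by
      rw [mul_one_div, div_div, mul_comm (Q ^ 2) 2]
    linarith [h1]
  rw [hQeq]
  calc 1 - r / (2 * Q ^ 2) < 1 + r * (-(x ^ 2 / 2)) := step3
  _ ≤ (1 - x ^ 2 / 2) ^ r := step2
  _ ≤ |Real.cos p| ^ r := step1
end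

section
/- Let m ≥ 2 be a real number and suppose there are infinitely many pairs of positive integers (p, q) with 0 < |π − p/q| < 1/q^m. Then for every real γ with 0 ≤ γ < 2(m − 1), every real α with 0 < α < 1, and every positive integer L, there exist infinitely many positive integers p such that |cos(k·p)|^((k·p)^γ) > α for every integer k with 1 ≤ k ≤ L. -/
open Filter Real

/-- Persistent subsequences: if `π` admits infinitely many rational approximations
`p/q` with `0 < |π - p/q| < 1/q^m` (with `m ≥ 2`), then for all `0 ≤ γ < 2(m-1)`,
`0 < α < 1` and every length `L`, there are infinitely many positive integers `p`
such that `|cos (k p)| ^ ((k p)^γ) > α` for all `1 ≤ k ≤ L`. -/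
theorem persistent_subsequences (m : ℝ) (hm : 2 ≤ m)
    (h : {pq : ℕ × ℕ | 0 < pq.1 ∧ 0 < pq.2 ∧
        0 < |Real.pi - (pq.1 : ℝ) / (pq.2 : ℝ)| ∧
        |Real.pi - (pq.1 : ℝ) / (pq.2 : ℝ)| < 1 / (pq.2 : ℝ) ^ m}.Infinite) :
    ∀ γ : ℝ, 0 ≤ γ → γ < 2 * (m - 1) →
      ∀ α : ℝ, 0 < α → α < 1 →
        ∀ L : ℕ, 0 < L →
          {p : ℕ | 0 < p ∧ ∀ k : ℕ, 1 ≤ k → k ≤ L →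
            |Real.cos ((k * p : ℕ) : ℝ)| ^ (((k * p : ℕ) : ℝ) ^ γ) > α}.Infinite := by
  intro γ hγ0 hγ α hα0 hα1 L hL
  -- basic bounds on approximating pairs
  have pq_bounds : ∀ p q : ℕ, 0 < q →
      |Real.pi - (p : ℝ) / (q : ℝ)| < 1 / (q : ℝ) ^ m →
      (p : ℝ) < 5 * q ∧ 2 * (q : ℝ) < p := by
    intro p q hq hlt
    have hq0 : (0 : ℝ) < q := by exact_mod_cast hq
    have hq1 : (1 : ℝ) ≤ q := by exact_mod_cast hq
    have hqm : (1 : ℝ) ≤ (q : ℝ) ^ m := Real.one_le_rpow hq1 (by linarith)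
    have h1 : 1 / (q : ℝ) ^ m ≤ 1 := by
      rw [div_le_one (by linarith)]; exact hqm
    have habs : |Real.pi - (p : ℝ) / q| < 1 := lt_of_lt_of_le hlt h1
    have h2 : Real.pi - (p : ℝ) / q < 1 := lt_of_le_of_lt (le_abs_self _) habs
    have h3 : (p : ℝ) / q - Real.pi < 1 := by
      have := lt_of_le_of_lt (neg_le_abs _) habs
      linarith [neg_sub Real.pi ((p : ℝ) / q)]
    have hpi1 : Real.pi < 3.15 := Real.pi_lt_d2
    have hpi2 : 3 < Real.pi := Real.pi_gt_three
    constructor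
    · have : (p : ℝ) / q < 5 := by linarith
      calc (p : ℝ) = ((p : ℝ) / q) * q := by field_simp
        _ < 5 * q := by apply mul_lt_mul_of_pos_right this hq0
    · have : 2 < (p : ℝ) / q := by linarith
      calc 2 * (q : ℝ) < ((p : ℝ) / q) * q := by
            apply mul_lt_mul_of_pos_right this hq0
        _ = p := by field_simp
  -- arbitrarily large denominators
  have key : ∀ Q : ℕ, ∃ p q : ℕ, Q ≤ q ∧ 0 < p ∧ 0 < q ∧
      |Real.pi - (p : ℝ) / (q : ℝ)| < 1 / (q : ℝ) ^ m := by
    intro Q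
    by_contra hc
    push_neg at hc
    apply h
    apply Set.Finite.subset (Set.finite_Iic ((5 * Q, Q) : ℕ × ℕ))
    rintro ⟨p, q⟩ ⟨hp, hq, -, hlt⟩
    have hqQ : q < Q := by
      by_contra hqQ
      push_neg at hqQ
      exact absurd hlt (not_lt.mpr (hc p q hqQ hp hq))
    have hp5 : (p : ℝ) < 5 * q := (pq_bounds p q hq hlt).1
    have hp5' : p < 5 * q := by exact_mod_cast hp5
    exact ⟨by simp; omega, hqQ.le⟩
  -- choose threshold from asymptotics
  have hlogα : Real.log α < 0 := Real.log_neg hα0 hα1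
  set C : ℝ := (L : ℝ) ^ 2 * (5 * (L : ℝ)) ^ γ with hC
  clear_value C
  have hexp_neg : (0 : ℝ) < 2 * m - 2 - γ := by linarith
  have hT1 : Tendsto (fun x : ℝ => C * x ^ (γ + (2 - 2 * m))) atTop (nhds 0) := by
    have := (tendsto_rpow_neg_atTop hexp_neg).const_mul C
    simpa [mul_zero, show -(2 * m - 2 - γ) = γ + (2 - 2 * m) by ring] using this
  have hT2 : Tendsto (fun x : ℝ => (L : ℝ) ^ 2 / 2 * x ^ (2 - 2 * m)) atTop (nhds 0) := by
    have := (tendsto_rpow_neg_atTop (show (0:ℝ) < 2 * m - 2 by linarith)).const_mul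
      ((L : ℝ) ^ 2 / 2)
    simpa [mul_zero, show -(2 * m - 2) = 2 - 2 * m by ring] using this
  have hev : ∀ᶠ x : ℝ in atTop, C * x ^ (γ + (2 - 2 * m)) < -Real.log α ∧
      (L : ℝ) ^ 2 / 2 * x ^ (2 - 2 * m) < 1 / 2 := by
    filter_upwards [hT1.eventually_lt_const (by linarith : (0:ℝ) < -Real.log α),
      hT2.eventually_lt_const (by norm_num : (0:ℝ) < 1 / 2)] with x h1 h2
    exact ⟨h1, h2⟩
  obtain ⟨X, hX⟩ := eventually_atTop.mp hev
  -- infinitude via unboundedness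
  apply Set.infinite_of_not_bddAbove
  rintro ⟨N, hN⟩
  -- pick a pair with large q
  obtain ⟨p, q, hQq, hp, hq, hlt⟩ := key (max (N + 1) ⌈X⌉₊)
  have hq0 : (0 : ℝ) < q := by exact_mod_cast hq
  have hq1 : (1 : ℝ) ≤ q := by exact_mod_cast hq
  have hqX : X ≤ (q : ℝ) := by
    have h1 : ⌈X⌉₊ ≤ q := le_trans (le_max_right _ _) hQq
    exact le_trans (Nat.le_ceil X) (by exact_mod_cast h1)
  obtain ⟨hcond1, hcond2⟩ := hX (q : ℝ) hqX
  obtain ⟨hp5, hp2⟩ := pq_bounds p q hq hlt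
  have hNq : N + 1 ≤ q := le_trans (le_max_left _ _) hQq
  have hpN : N < p := by
    have : 2 * (N + 1 : ℝ) ≤ 2 * q := by
      have : ((N:ℝ) + 1) ≤ q := by exact_mod_cast hNq
      linarith
    have : (N : ℝ) < p := by linarith
    exact_mod_cast this
  -- the error term
  have herr : |(p : ℝ) - q * Real.pi| < (q : ℝ) ^ (1 - m) := by
    have heq : (q : ℝ) * (Real.pi - (p : ℝ) / q) = (q : ℝ) * Real.pi - p := by
      field_simp
    have : |(q : ℝ) * (Real.pi - (p : ℝ) / q)| < (q : ℝ) * (1 / (q : ℝ) ^ m) := by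
      rw [abs_mul, abs_of_pos hq0]
      exact mul_lt_mul_of_pos_left hlt hq0
    rw [heq] at this
    rw [abs_sub_comm]
    calc |(q : ℝ) * Real.pi - p| < (q : ℝ) * (1 / (q : ℝ) ^ m) := this
      _ = (q : ℝ) ^ (1 - m) := by
          rw [Real.rpow_sub hq0, Real.rpow_one, mul_one_div]
  suffices hmem : p ∈ {p : ℕ | 0 < p ∧ ∀ k : ℕ, 1 ≤ k → k ≤ L →
      |Real.cos ((k * p : ℕ) : ℝ)| ^ (((k * p : ℕ) : ℝ) ^ γ) > α} by
    exact absurd (hN hmem) (by omega)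
  refine ⟨hp, fun k hk1 hkL => ?_⟩
  -- main estimate for each k
  have hk0 : (0 : ℝ) < k := by exact_mod_cast hk1
  have hkLr : (k : ℝ) ≤ L := by exact_mod_cast hkL
  set θ : ℝ := ((k * p : ℕ) : ℝ) - ((k * q : ℕ) : ℝ) * Real.pi with hθdef
  clear_value θ
  have hcos_eq : |Real.cos ((k * p : ℕ) : ℝ)| = |Real.cos θ| := by
    have : ((k * p : ℕ) : ℝ) = θ + ((k * q : ℕ) : ℝ) * Real.pi := by
      rw [hθdef]; ring
    rw [this, Real.cos_add_nat_mul_pi, abs_mul]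
    simp
  have hθabs : |θ| ≤ (L : ℝ) * (q : ℝ) ^ (1 - m) := by
    have : θ = (k : ℝ) * ((p : ℝ) - q * Real.pi) := by
      rw [hθdef]; push_cast; ring
    rw [this, abs_mul, abs_of_pos hk0]
    calc (k : ℝ) * |(p : ℝ) - q * Real.pi| ≤ (L : ℝ) * |(p : ℝ) - q * Real.pi| := by
          apply mul_le_mul_of_nonneg_right hkLr (abs_nonneg _)
      _ ≤ (L : ℝ) * (q : ℝ) ^ (1 - m) := by
          apply mul_le_mul_of_nonneg_left herr.le (by positivity)
  set δ : ℝ := (L : ℝ) ^ 2 / 2 * (q : ℝ) ^ (2 - 2 * m) with hδdef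
  clear_value δ
  have hδ0 : 0 ≤ δ := by rw [hδdef]; positivity
  have hδhalf : δ < 1 / 2 := hcond2
  have hθsq : θ ^ 2 / 2 ≤ δ := by
    have h1 : θ ^ 2 ≤ ((L : ℝ) * (q : ℝ) ^ (1 - m)) ^ 2 := by
      rw [← sq_abs θ]
      exact pow_le_pow_left₀ (abs_nonneg θ) hθabs 2
    have h2 : ((L : ℝ) * (q : ℝ) ^ (1 - m)) ^ 2 = (L : ℝ) ^ 2 * (q : ℝ) ^ (2 - 2 * m) := by
      rw [mul_pow, ← Real.rpow_natCast ((q:ℝ) ^ (1 - m)) 2, ← Real.rpow_mul hq0.le,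
        show (1 - m) * ((2:ℕ):ℝ) = 2 - 2 * m by push_cast; ring]
    rw [hδdef]
    rw [h2] at h1
    linarith [h1]
  have hcosθ_lb : 1 - δ ≤ |Real.cos θ| := by
    calc 1 - δ ≤ 1 - θ ^ 2 / 2 := by linarith
      _ ≤ Real.cos θ := Real.one_sub_sq_div_two_le_cos
      _ ≤ |Real.cos θ| := le_abs_self _
  -- exponent bound
  set E : ℝ := ((k * p : ℕ) : ℝ) ^ γ with hEdef
  clear_value E
  set Emax : ℝ := (5 * (L : ℝ) * q) ^ γ with hEmaxdef
  clear_value Emax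
  have hE0 : 0 ≤ E := by rw [hEdef]; exact Real.rpow_nonneg (by positivity) γ
  have hEle : E ≤ Emax := by
    rw [hEdef, hEmaxdef]
    apply Real.rpow_le_rpow (by positivity) _ hγ0
    push_cast
    calc (k : ℝ) * p ≤ (L : ℝ) * p := by
          apply mul_le_mul_of_nonneg_right hkLr (by positivity)
      _ ≤ (L : ℝ) * (5 * q) := by
          apply mul_le_mul_of_nonneg_left hp5.le (by positivity)
      _ = 5 * (L : ℝ) * q := by ring
  have hEmax0 : 0 ≤ Emax := by rw [hEmaxdef]; exact Real.rpow_nonneg (by positivity) γ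
  -- key: 2 * δ * Emax < -log α
  have hkey : 2 * δ * Emax < -Real.log α := by
    have hsplit : Emax = (5 * (L : ℝ)) ^ γ * (q : ℝ) ^ γ := by
      rw [hEmaxdef, Real.mul_rpow (by positivity) hq0.le]
    have hcomb : (q : ℝ) ^ (2 - 2 * m) * (q : ℝ) ^ γ = (q : ℝ) ^ (γ + (2 - 2 * m)) := by
      rw [← Real.rpow_add hq0]; ring_nf
    calc 2 * δ * Emax = C * (q : ℝ) ^ (γ + (2 - 2 * m)) := by
          rw [hδdef, hsplit, hC, ← hcomb]; ring
      _ < -Real.log α := hcond1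
  -- chain of inequalities
  have hexple : Real.exp (-(2 * δ)) ≤ 1 - δ := by
    have h2 : 1 + 2 * δ ≤ Real.exp (2 * δ) := by
      linarith [Real.add_one_le_exp (2 * δ)]
    have hA : 1 ≤ (1 - δ) * Real.exp (2 * δ) := by
      have hmul := mul_le_mul_of_nonneg_left h2 (by linarith : (0:ℝ) ≤ 1 - δ)
      have h0 : 0 ≤ δ * (1 - 2 * δ) := mul_nonneg hδ0 (by linarith)
      have he : (1 - δ) * (1 + 2 * δ) = 1 + δ * (1 - 2 * δ) := by ring
      linarith [hmul, h0, he.le, he.ge]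
    have hE := Real.exp_pos (2 * δ)
    calc Real.exp (-(2 * δ)) = 1 / Real.exp (2 * δ) := by rw [Real.exp_neg, one_div]
      _ ≤ 1 - δ := by
          rw [div_le_iff₀ hE]
          linarith
  have step1 : α < Real.exp (-(2 * δ) * Emax) := by
    have : Real.log α < -(2 * δ) * Emax := by linarith
    calc α = Real.exp (Real.log α) := (Real.exp_log hα0).symm
      _ < Real.exp (-(2 * δ) * Emax) := Real.exp_lt_exp.mpr this
  have step2 : Real.exp (-(2 * δ) * Emax) = Real.exp (-(2 * δ)) ^ Emax :=
    Real.exp_mul _ _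
  have step3 : Real.exp (-(2 * δ)) ^ Emax ≤ (1 - δ) ^ Emax :=
    Real.rpow_le_rpow (Real.exp_pos _).le hexple hEmax0
  have h1δ0 : (0 : ℝ) < 1 - δ := by linarith
  have step4 : (1 - δ) ^ Emax ≤ (1 - δ) ^ E :=
    Real.rpow_le_rpow_of_exponent_ge h1δ0 (by linarith) hEle
  have step5 : (1 - δ) ^ E ≤ |Real.cos θ| ^ E :=
    Real.rpow_le_rpow h1δ0.le hcosθ_lb hE0
  have : α < |Real.cos θ| ^ E := by
    rw [step2] at step1
    exact lt_of_lt_of_le step1 (le_trans step3 (le_trans step4 step5))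
  rw [hcos_eq]
  exact this
end
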